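/- Fix reals ε_e > 0, Δ ≥ 0, ε_a with Δ/(1+Δ) < ε_a < 1. Let g^out be the Beta density on (0,1) with parameters ((1−ε_a)/ε_e, ε_a/ε_e) and g^in the Beta density with parameters ((1+Δ)(1−ε_a)/ε_e, (ε_a(1+Δ)−Δ)/ε_e). Then the symmetrized KL divergence satisfies ∫_0^1 g^out log(g^out/g^in) dt + ∫_0^1 g^in log(g^in/g^out) dt = (Δ(1−ε_a)/ε_e) · ( ψ((1+Δ)(1−ε_a)/ε_e) − ψ((1−ε_a)/ε_e) + ψ(ε_a/ε_e) − ψ((ε_a(1+Δ)−Δ)/ε_e) ). -/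

import Mathlib

open MeasureTheory

/-- Digamma function `ψ(x) = Γ'(x)/Γ(x)`. -/
noncomputable def digamma (x : ℝ) : ℝ := deriv Real.Gamma x / Real.Gamma x

/-- Beta density on `(0,1)` with parameters `(a, b)`. -/
noncomputable def betaPdf (a b t : ℝ) : ℝ :=
  t ^ (a - 1) * (1 - t) ^ (b - 1) / (Real.Gamma a * Real.Gamma b / Real.Gamma (a + b))

open Real Set

lemma complex_eq_aux {a b : ℝ} {t : ℝ} (ht : t ∈ Set.Ioo (0:ℝ) 1) :
    (t:ℂ) ^ ((a:ℂ) - 1) * (1 - (t:ℂ)) ^ ((b:ℂ) - 1)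
      = ((t ^ (a-1) * (1-t) ^ (b-1) : ℝ) : ℂ) := by
  have h1 : (0:ℝ) ≤ t := le_of_lt ht.1
  have h2 : (0:ℝ) ≤ 1 - t := by linarith [ht.2]
  have e1 : ((a:ℂ) - 1) = ((a - 1 : ℝ) : ℂ) := by push_cast; ring
  have e2 : ((b:ℂ) - 1) = ((b - 1 : ℝ) : ℂ) := by push_cast; ring
  have e3 : (1 - (t:ℂ)) = ((1 - t : ℝ) : ℂ) := by push_cast; ring
  rw [e1, e2, e3, ← Complex.ofReal_cpow h1, ← Complex.ofReal_cpow h2]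
  push_cast
  ring

lemma betaInt_integrableOn {a b : ℝ} (ha : 0 < a) (hb : 0 < b) :
    IntegrableOn (fun t : ℝ => t ^ (a-1) * (1-t) ^ (b-1)) (Set.Ioo 0 1) := by
  have hC : IntervalIntegrable (fun x : ℝ => (x:ℂ) ^ ((a:ℂ)-1) * (1-(x:ℂ)) ^ ((b:ℂ)-1))
      volume 0 1 := Complex.betaIntegral_convergent (by simpa using ha) (by simpa using hb)
  have hC' : IntegrableOn (fun x : ℝ => (x:ℂ) ^ ((a:ℂ)-1) * (1-(x:ℂ)) ^ ((b:ℂ)-1))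
      (Set.Ioo 0 1) := (hC.1).mono_set Set.Ioo_subset_Ioc_self
  have hre : IntegrableOn (fun x : ℝ => Complex.re ((x:ℂ) ^ ((a:ℂ)-1) * (1-(x:ℂ)) ^ ((b:ℂ)-1)))
      (Set.Ioo 0 1) := hC'.re
  refine hre.congr_fun ?_ measurableSet_Ioo
  intro t ht
  simp only [complex_eq_aux ht, Complex.ofReal_re]

lemma betaInt_value {a b : ℝ} (ha : 0 < a) (hb : 0 < b) :
    ∫ t in Set.Ioo (0:ℝ) 1, t ^ (a-1) * (1-t) ^ (b-1)
      = Real.Gamma a * Real.Gamma b / Real.Gamma (a+b) := by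
  have hci : Complex.betaIntegral (a:ℂ) (b:ℂ)
      = ((Real.Gamma a * Real.Gamma b / Real.Gamma (a+b) : ℝ) : ℂ) := by
    have h := Complex.Gamma_mul_Gamma_eq_betaIntegral (s := (a:ℂ)) (t := (b:ℂ))
      (by simpa using ha) (by simpa using hb)
    have hne : Complex.Gamma ((a:ℂ)+(b:ℂ)) ≠ 0 :=
      Complex.Gamma_ne_zero_of_re_pos (by simpa using add_pos ha hb)
    have : Complex.betaIntegral (a:ℂ) (b:ℂ)
        = Complex.Gamma (a:ℂ) * Complex.Gamma (b:ℂ) / Complex.Gamma ((a:ℂ)+(b:ℂ)) := by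
      rw [h]; field_simp
    rw [this]
    rw [show ((a:ℂ)+(b:ℂ)) = ((a+b : ℝ) : ℂ) by push_cast; ring]
    rw [Complex.Gamma_ofReal, Complex.Gamma_ofReal, Complex.Gamma_ofReal]
    push_cast
    ring
  have h2 : Complex.betaIntegral (a:ℂ) (b:ℂ)
      = ∫ t in Set.Ioo (0:ℝ) 1, ((t ^ (a-1) * (1-t) ^ (b-1) : ℝ) : ℂ) := by
    rw [Complex.betaIntegral, intervalIntegral.integral_of_le (by norm_num : (0:ℝ) ≤ 1),
      MeasureTheory.integral_Ioc_eq_integral_Ioo]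
    exact setIntegral_congr_fun measurableSet_Ioo (fun t ht => complex_eq_aux ht)
  have := h2.symm.trans hci
  rw [show (fun t : ℝ => ((t ^ (a-1) * (1-t) ^ (b-1) : ℝ) : ℂ))
      = (fun t : ℝ => (RCLike.ofReal (t ^ (a-1) * (1-t) ^ (b-1)) : ℂ)) from rfl,
    integral_ofReal] at this
  exact Complex.ofReal_injective this

lemma abs_log_le {δ t : ℝ} (hδ : 0 < δ) (h0 : 0 < t) (h1 : t ≤ 1) :
    |Real.log t| ≤ δ⁻¹ * t ^ (-δ) := by
  have h := (Real.abs_log_mul_self_rpow_lt t δ h0 h1 hδ).le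
  have htδ : 0 < t ^ δ := Real.rpow_pos_of_pos h0 δ
  have : |Real.log t| * t ^ δ ≤ 1/δ := by
    rwa [abs_mul, abs_of_pos htδ] at h
  have h2 : |Real.log t| ≤ (1/δ) / t ^ δ := (le_div_iff₀ htδ).mpr this
  calc |Real.log t| ≤ (1/δ) / t ^ δ := h2
    _ = δ⁻¹ * t ^ (-δ) := by
        rw [Real.rpow_neg h0.le, div_eq_mul_inv, one_div]

lemma betaContinuousOn (a b : ℝ) :
    ContinuousOn (fun t : ℝ => t ^ (a-1) * (1-t) ^ (b-1)) (Set.Ioo (0:ℝ) 1) := by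
  apply ContinuousOn.mul
  · intro t ht
    exact (Real.continuousAt_rpow_const t (a-1) (Or.inl ht.1.ne')).continuousWithinAt
  · intro t ht
    have h : (1:ℝ) - t ≠ 0 := by have := ht.2; intro h; nlinarith [sub_eq_zero.mp h]
    exact ((Real.continuousAt_rpow_const (1-t) (b-1) (Or.inl h)).comp
      (by continuity : Continuous (fun t : ℝ => 1 - t)).continuousAt).continuousWithinAt

lemma betaMeasurable (a b : ℝ) :
    AEStronglyMeasurable (fun t : ℝ => t ^ (a-1) * (1-t) ^ (b-1))
      (volume.restrict (Set.Ioo (0:ℝ) 1)) :=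
  (betaContinuousOn a b).aestronglyMeasurable measurableSet_Ioo

lemma betaLogMeasurable (a b : ℝ) :
    AEStronglyMeasurable (fun t : ℝ => Real.log t * (t ^ (a-1) * (1-t) ^ (b-1)))
      (volume.restrict (Set.Ioo (0:ℝ) 1)) := by
  refine ContinuousOn.aestronglyMeasurable ?_ measurableSet_Ioo
  exact ContinuousOn.mul (fun t ht => (Real.continuousAt_log ht.1.ne').continuousWithinAt)
    (betaContinuousOn a b)

lemma bound_aux {a b s t : ℝ} (ha : 0 < a) (hs : a/2 ≤ s) (ht : t ∈ Set.Ioo (0:ℝ) 1) :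
    ‖Real.log t * (t ^ (s-1) * (1-t) ^ (b-1))‖
      ≤ (4/a) * (t ^ (a/4-1) * (1-t) ^ (b-1)) := by
  have h0 : 0 < t := ht.1
  have h1 : t < 1 := ht.2
  have h1' : 0 < 1 - t := by linarith
  have hts : 0 < t ^ (s-1) := Real.rpow_pos_of_pos h0 _
  have ht1 : 0 < (1-t) ^ (b-1) := Real.rpow_pos_of_pos h1' _
  rw [Real.norm_eq_abs, abs_mul, abs_of_pos (mul_pos hts ht1)]
  have hlog : |Real.log t| ≤ (a/4)⁻¹ * t ^ (-(a/4)) :=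
    abs_log_le (by linarith) h0 h1.le
  have hpow : t ^ (s-1) ≤ t ^ (a/2-1) :=
    Real.rpow_le_rpow_of_exponent_ge h0 h1.le (by linarith)
  calc |Real.log t| * (t ^ (s-1) * (1-t) ^ (b-1))
      ≤ ((a/4)⁻¹ * t ^ (-(a/4))) * (t ^ (a/2-1) * (1-t) ^ (b-1)) := by
        apply mul_le_mul hlog _ (by positivity) (by positivity)
        exact mul_le_mul_of_nonneg_right hpow ht1.le
    _ = (4/a) * (t ^ (-(a/4) + (a/2-1)) * (1-t) ^ (b-1)) := by
        rw [Real.rpow_add h0]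
        field_simp
    _ = (4/a) * (t ^ (a/4-1) * (1-t) ^ (b-1)) := by ring_nf

lemma betaLog_integrableOn {a b : ℝ} (ha : 0 < a) (hb : 0 < b) :
    IntegrableOn (fun t : ℝ => Real.log t * (t ^ (a-1) * (1-t) ^ (b-1)))
      (Set.Ioo 0 1) := by
  refine Integrable.mono'
    ((betaInt_integrableOn (by positivity : (0:ℝ) < a/4) hb).const_mul (4/a))
    (betaLogMeasurable a b) ?_
  rw [ae_restrict_iff' measurableSet_Ioo]
  filter_upwards with t ht
  exact bound_aux ha (by linarith) ht

lemma betaDeriv {a b : ℝ} (ha : 0 < a) (hb : 0 < b) :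
    HasDerivAt (fun s => ∫ t in Set.Ioo (0:ℝ) 1, t ^ (s-1) * (1-t) ^ (b-1))
      (∫ t in Set.Ioo (0:ℝ) 1, Real.log t * (t ^ (a-1) * (1-t) ^ (b-1))) a := by
  have key := hasDerivAt_integral_of_dominated_loc_of_deriv_le
    (F := fun s (t : ℝ) => t ^ (s-1) * (1-t) ^ (b-1))
    (F' := fun s (t : ℝ) => Real.log t * (t ^ (s-1) * (1-t) ^ (b-1)))
    (x₀ := a) (s := Metric.ball a (a/4))
    (μ := volume.restrict (Set.Ioo (0:ℝ) 1))
    (bound := fun t => (4/a) * (t ^ (a/4-1) * (1-t) ^ (b-1)))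
    (Metric.ball_mem_nhds a (by positivity))
    (Filter.Eventually.of_forall fun s => betaMeasurable s b)
    (betaInt_integrableOn ha hb)
    (betaLogMeasurable a b)
    ?_ ?_ ?_
  · exact key.2
  · rw [ae_restrict_iff' measurableSet_Ioo]
    filter_upwards with t ht s hsb
    have : |s - a| < a/4 := by
      rw [Metric.mem_ball, Real.dist_eq] at hsb; exact hsb
    exact bound_aux ha (by cases abs_lt.mp this; linarith) ht
  · exact (betaInt_integrableOn (by positivity : (0:ℝ) < a/4) hb).const_mul (4/a)
  · rw [ae_restrict_iff' measurableSet_Ioo]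
    filter_upwards with t ht s _
    have h0 : 0 < t := ht.1
    have hd : HasDerivAt (fun s : ℝ => t ^ (s - 1))
        (t ^ (s-1) * Real.log t) s := by
      have := (Real.hasStrictDerivAt_const_rpow h0 (s - 1)).hasDerivAt
      have hcmp := this.comp s ((hasDerivAt_id s).sub_const 1)
      simpa [Function.comp_def] using hcmp
    have := hd.mul_const ((1-t) ^ (b-1))
    refine this.congr_deriv ?_
    ring

lemma Gamma_diffAt {x : ℝ} (hx : 0 < x) : DifferentiableAt ℝ Real.Gamma x :=
  Real.differentiableAt_Gamma (fun n => ne_of_gt (by linarith [Nat.cast_nonneg (α:=ℝ) n]))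

lemma GammaQuotDeriv {a b : ℝ} (ha : 0 < a) (hb : 0 < b) :
    HasDerivAt (fun s => Real.Gamma s * Real.Gamma b / Real.Gamma (s+b))
      ((Real.Gamma a * Real.Gamma b / Real.Gamma (a+b)) * (digamma a - digamma (a+b))) a := by
  have hab : 0 < a + b := by linarith
  have hΓa := (Gamma_diffAt ha).hasDerivAt
  have hΓab : HasDerivAt (fun s => Real.Gamma (s+b)) (deriv Real.Gamma (a+b)) a := by
    have := (Gamma_diffAt hab).hasDerivAt.comp a ((hasDerivAt_id a).add_const b)
    simpa [Function.comp_def] using this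
  have hne : Real.Gamma (a+b) ≠ 0 := (Real.Gamma_pos_of_pos hab).ne'
  have hnea : Real.Gamma a ≠ 0 := (Real.Gamma_pos_of_pos ha).ne'
  have := (hΓa.mul_const (Real.Gamma b)).div hΓab hne
  refine this.congr_deriv ?_
  unfold digamma
  field_simp

lemma integral_log_beta {a b : ℝ} (ha : 0 < a) (hb : 0 < b) :
    ∫ t in Set.Ioo (0:ℝ) 1, Real.log t * (t ^ (a-1) * (1-t) ^ (b-1))
      = (Real.Gamma a * Real.Gamma b / Real.Gamma (a+b)) * (digamma a - digamma (a+b)) := by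
  have h1 := betaDeriv ha hb
  have h2 := GammaQuotDeriv ha hb
  have heq : (fun s => Real.Gamma s * Real.Gamma b / Real.Gamma (s+b))
      =ᶠ[nhds a] (fun s => ∫ t in Set.Ioo (0:ℝ) 1, t ^ (s-1) * (1-t) ^ (b-1)) := by
    filter_upwards [isOpen_Ioi.mem_nhds (Set.mem_Ioi.mpr ha)] with s hs
    exact (betaInt_value (Set.mem_Ioi.mp hs) hb).symm
  exact ((h2.congr_of_eventuallyEq heq.symm).unique h1).symm

lemma integral_log_one_sub_beta {a b : ℝ} (ha : 0 < a) (hb : 0 < b) :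
    ∫ t in Set.Ioo (0:ℝ) 1, Real.log (1-t) * (t ^ (a-1) * (1-t) ^ (b-1))
      = (Real.Gamma a * Real.Gamma b / Real.Gamma (a+b)) * (digamma b - digamma (a+b)) := by
  have key : ∫ t in Set.Ioo (0:ℝ) 1, Real.log (1-t) * (t ^ (a-1) * (1-t) ^ (b-1))
      = ∫ u in Set.Ioo (0:ℝ) 1, Real.log u * (u ^ (b-1) * (1-u) ^ (a-1)) := by
    rw [← MeasureTheory.integral_Ioc_eq_integral_Ioo,
        ← MeasureTheory.integral_Ioc_eq_integral_Ioo,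
        ← intervalIntegral.integral_of_le (zero_le_one),
        ← intervalIntegral.integral_of_le (zero_le_one)]
    have hc := intervalIntegral.integral_comp_sub_left (a := (0:ℝ)) (b := 1)
      (fun u => Real.log u * (u ^ (b-1) * (1-u) ^ (a-1))) 1
    norm_num at hc
    rw [← hc]
    apply intervalIntegral.integral_congr
    intro t _
    simp only [sub_sub_cancel]
    ring
  rw [key, integral_log_beta hb ha, add_comm b a]
  ring

lemma betaLogOneSub_integrableOn {a b : ℝ} (ha : 0 < a) (hb : 0 < b) :
    IntegrableOn (fun t : ℝ => Real.log (1-t) * (t ^ (a-1) * (1-t) ^ (b-1)))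
      (Set.Ioo 0 1) := by
  have hmeas : AEStronglyMeasurable (fun t : ℝ => Real.log (1-t) * (t ^ (a-1) * (1-t) ^ (b-1)))
      (volume.restrict (Set.Ioo (0:ℝ) 1)) := by
    refine ContinuousOn.aestronglyMeasurable ?_ measurableSet_Ioo
    refine ContinuousOn.mul ?_ (betaContinuousOn a b)
    intro t ht
    have h : (1:ℝ) - t ≠ 0 := by have := ht.2; intro h; nlinarith [sub_eq_zero.mp h]
    exact ((Real.continuousAt_log h).comp
      (by continuity : Continuous (fun t : ℝ => 1 - t)).continuousAt).continuousWithinAt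
  refine Integrable.mono'
    ((betaInt_integrableOn ha (by positivity : (0:ℝ) < b/2)).const_mul (2/b)) hmeas ?_
  rw [ae_restrict_iff' measurableSet_Ioo]
  filter_upwards with t ht
  have h0 : 0 < t := ht.1
  have h1' : 0 < 1 - t := by have := ht.2; linarith
  have hta : 0 < t ^ (a-1) := Real.rpow_pos_of_pos h0 _
  have ht1 : 0 < (1-t) ^ (b-1) := Real.rpow_pos_of_pos h1' _
  rw [Real.norm_eq_abs, abs_mul, abs_of_pos (mul_pos hta ht1)]
  have hlog : |Real.log (1-t)| ≤ (b/2)⁻¹ * (1-t) ^ (-(b/2)) :=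
    abs_log_le (by linarith) h1' (by linarith [ht.1])
  calc |Real.log (1-t)| * (t ^ (a-1) * (1-t) ^ (b-1))
      ≤ ((b/2)⁻¹ * (1-t) ^ (-(b/2))) * (t ^ (a-1) * (1-t) ^ (b-1)) :=
        mul_le_mul_of_nonneg_right hlog (by positivity)
    _ = (2/b) * (t ^ (a-1) * (1-t) ^ (-(b/2) + (b-1))) := by
        rw [Real.rpow_add h1']
        field_simp
    _ = (2/b) * (t ^ (a-1) * (1-t) ^ (b/2-1)) := by ring_nf

lemma KL_int {a1 b1 a2 b2 : ℝ} (ha1 : 0 < a1) (hb1 : 0 < b1) (ha2 : 0 < a2) (hb2 : 0 < b2) :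
    ∫ t in Set.Ioo (0:ℝ) 1, betaPdf a1 b1 t * Real.log (betaPdf a1 b1 t / betaPdf a2 b2 t)
      = (a1-a2) * (digamma a1 - digamma (a1+b1))
        + (b1-b2) * (digamma b1 - digamma (a1+b1))
        + (Real.log (Real.Gamma a2 * Real.Gamma b2 / Real.Gamma (a2+b2))
            - Real.log (Real.Gamma a1 * Real.Gamma b1 / Real.Gamma (a1+b1))) := by
  set B1 := Real.Gamma a1 * Real.Gamma b1 / Real.Gamma (a1+b1) with hB1def
  set B2 := Real.Gamma a2 * Real.Gamma b2 / Real.Gamma (a2+b2) with hB2def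
  have hB1 : 0 < B1 := by
    rw [hB1def]
    have := Real.Gamma_pos_of_pos ha1
    have := Real.Gamma_pos_of_pos hb1
    have := Real.Gamma_pos_of_pos (by linarith : (0:ℝ) < a1 + b1)
    positivity
  have hB2 : 0 < B2 := by
    rw [hB2def]
    have := Real.Gamma_pos_of_pos ha2
    have := Real.Gamma_pos_of_pos hb2
    have := Real.Gamma_pos_of_pos (by linarith : (0:ℝ) < a2 + b2)
    positivity
  have hcongr : ∀ t ∈ Set.Ioo (0:ℝ) 1,
      betaPdf a1 b1 t * Real.log (betaPdf a1 b1 t / betaPdf a2 b2 t)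
        = B1⁻¹ * ((a1-a2) * (Real.log t * (t ^ (a1-1) * (1-t) ^ (b1-1)))
            + ((b1-b2) * (Real.log (1-t) * (t ^ (a1-1) * (1-t) ^ (b1-1)))
              + (Real.log B2 - Real.log B1) * (t ^ (a1-1) * (1-t) ^ (b1-1)))) := by
    intro t ht
    have h0 : (0:ℝ) < t := ht.1
    have h1 : (0:ℝ) < 1 - t := by have := ht.2; linarith
    have hf1 : 0 < t ^ (a1-1) * (1-t) ^ (b1-1) := by positivity
    have hf2 : 0 < t ^ (a2-1) * (1-t) ^ (b2-1) := by positivity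
    have hp1 : 0 < betaPdf a1 b1 t := by
      rw [betaPdf, ← hB1def]; positivity
    have hp2 : 0 < betaPdf a2 b2 t := by
      rw [betaPdf, ← hB2def]; positivity
    have hlog : Real.log (betaPdf a1 b1 t / betaPdf a2 b2 t)
        = (a1-a2) * Real.log t + (b1-b2) * Real.log (1-t)
          + (Real.log B2 - Real.log B1) := by
      rw [Real.log_div hp1.ne' hp2.ne']
      rw [show betaPdf a1 b1 t = t ^ (a1-1) * (1-t) ^ (b1-1) / B1 from rfl,
          show betaPdf a2 b2 t = t ^ (a2-1) * (1-t) ^ (b2-1) / B2 from rfl]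
      rw [Real.log_div hf1.ne' hB1.ne', Real.log_div hf2.ne' hB2.ne',
          Real.log_mul (Real.rpow_pos_of_pos h0 _).ne' (Real.rpow_pos_of_pos h1 _).ne',
          Real.log_mul (Real.rpow_pos_of_pos h0 _).ne' (Real.rpow_pos_of_pos h1 _).ne',
          Real.log_rpow h0, Real.log_rpow h1, Real.log_rpow h0, Real.log_rpow h1]
      ring
    rw [hlog, show betaPdf a1 b1 t = t ^ (a1-1) * (1-t) ^ (b1-1) / B1 from rfl]
    field_simp
    ring
  rw [setIntegral_congr_fun measurableSet_Ioo hcongr]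
  have hI1 : Integrable (fun t : ℝ => (a1-a2) * (Real.log t * (t ^ (a1-1) * (1-t) ^ (b1-1))))
      (volume.restrict (Set.Ioo (0:ℝ) 1)) := (betaLog_integrableOn ha1 hb1).const_mul _
  have hI2 : Integrable (fun t : ℝ => (b1-b2) * (Real.log (1-t) * (t ^ (a1-1) * (1-t) ^ (b1-1))))
      (volume.restrict (Set.Ioo (0:ℝ) 1)) := (betaLogOneSub_integrableOn ha1 hb1).const_mul _
  have hI3 : Integrable (fun t : ℝ => (Real.log B2 - Real.log B1) * (t ^ (a1-1) * (1-t) ^ (b1-1)))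
      (volume.restrict (Set.Ioo (0:ℝ) 1)) := (betaInt_integrableOn ha1 hb1).const_mul _
  have hI23 : Integrable (fun t : ℝ => (b1-b2) * (Real.log (1-t) * (t ^ (a1-1) * (1-t) ^ (b1-1)))
      + (Real.log B2 - Real.log B1) * (t ^ (a1-1) * (1-t) ^ (b1-1)))
      (volume.restrict (Set.Ioo (0:ℝ) 1)) := hI2.add hI3
  rw [MeasureTheory.integral_const_mul, integral_add hI1 hI23, integral_add hI2 hI3,
      MeasureTheory.integral_const_mul, MeasureTheory.integral_const_mul, MeasureTheory.integral_const_mul,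
      integral_log_beta ha1 hb1, integral_log_one_sub_beta ha1 hb1, betaInt_value ha1 hb1,
      ← hB1def]
  field_simp
  ring

/-- Closed form of the symmetrized KL divergence between the two Beta densities
arising under true-label-confidence disclosure. -/
theorem stmt11 (epsE Δ epsA : ℝ)
    (hεe : 0 < epsE) (hΔ : 0 ≤ Δ) (hεa₁ : Δ / (1 + Δ) < epsA) (hεa₂ : epsA < 1) :
    (∫ t in Set.Ioo (0 : ℝ) 1,
        betaPdf ((1 - epsA) / epsE) (epsA / epsE) t
          * Real.log (betaPdf ((1 - epsA) / epsE) (epsA / epsE) t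
              / betaPdf ((1 + Δ) * (1 - epsA) / epsE) ((epsA * (1 + Δ) - Δ) / epsE) t))
      + (∫ t in Set.Ioo (0 : ℝ) 1,
          betaPdf ((1 + Δ) * (1 - epsA) / epsE) ((epsA * (1 + Δ) - Δ) / epsE) t
            * Real.log (betaPdf ((1 + Δ) * (1 - epsA) / epsE) ((epsA * (1 + Δ) - Δ) / epsE) t
                / betaPdf ((1 - epsA) / epsE) (epsA / epsE) t))
      = (Δ * (1 - epsA) / epsE) *
          (digamma ((1 + Δ) * (1 - epsA) / epsE) - digamma ((1 - epsA) / epsE)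
            + digamma (epsA / epsE) - digamma ((epsA * (1 + Δ) - Δ) / epsE)) := by
  have h1Δ : (0:ℝ) < 1 + Δ := by linarith
  have hεa0 : 0 < epsA := lt_of_le_of_lt (div_nonneg hΔ h1Δ.le) hεa₁
  have h1εa : 0 < 1 - epsA := by linarith
  have hb2' : 0 < epsA * (1+Δ) - Δ := by
    have := (div_lt_iff₀ h1Δ).mp hεa₁
    linarith
  have ha1 : 0 < (1 - epsA)/epsE := by positivity
  have hb1 : 0 < epsA/epsE := by positivity
  have ha2 : 0 < (1+Δ)*(1-epsA)/epsE := by positivity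
  have hb2 : 0 < (epsA*(1+Δ)-Δ)/epsE := by positivity
  rw [KL_int ha1 hb1 ha2 hb2, KL_int ha2 hb2 ha1 hb1]
  have hS : (1+Δ)*(1-epsA)/epsE + (epsA*(1+Δ)-Δ)/epsE = (1-epsA)/epsE + epsA/epsE := by
    field_simp
    ring
  rw [hS]
  have hc1 : (1-epsA)/epsE - (1+Δ)*(1-epsA)/epsE = -(Δ*(1-epsA)/epsE) := by ring
  have hc2 : epsA/epsE - (epsA*(1+Δ)-Δ)/epsE = Δ*(1-epsA)/epsE := by ring
  linear_combination
    (digamma ((1-epsA)/epsE) - digamma ((1+Δ)*(1-epsA)/epsE)) * hc1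
      + (digamma (epsA/epsE) - digamma ((epsA*(1+Δ)-Δ)/epsE)) * hc2
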